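/- arXiv:1410.7012 — 3 statements merged into one kernel-verified Lean document; each statement's English description precedes it below -/
import Mathlib

section
/- Let L be a finite set of points in ℝ^d, ω : L → [0,∞) a weight assignment, and H ⊆ ℝ^d a k-dimensional affine subspace. For q ∈ L let q' denote the orthogonal projection of q onto H, and define ξ on the projected points by ξ(q')² = ω(q)² − ‖q − q'‖² + max_{x ∈ L} ‖x − x'‖². Then for every p ∈ L, the intersection Vor_ω(p) ∩ H equals the weighted Voronoi cell of p' inside H with weights ξ, i.e., Vor_ω(p) ∩ H = {x ∈ H : ‖x − p'‖² − ξ(p')² ≤ ‖x − q'‖² − ξ(q')² for all q ∈ L}. -/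
/-!
On the flat `H`, Pythagoras gives `‖x - q‖² = ‖x - q'‖² + ‖q - q'‖²`, so the power distance from
`x ∈ H` to `q` with weight `ω q` equals the power distance to `q'` with squared weight
`ω q ² - ‖q - q'‖²`. Adding the same constant `max ‖x - x'‖²` to every squared weight (which makes
them nonnegative) does not change any comparison between power distances.
-/

noncomputable section

/-- Weighted Voronoi cell of `p` among the points of `L`. -/
def vorCell {d : ℕ} (L : Finset (EuclideanSpace ℝ (Fin d))) (ω : EuclideanSpace ℝ (Fin d) → ℝ)
    (p : EuclideanSpace ℝ (Fin d)) : Set (EuclideanSpace ℝ (Fin d)) :=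
  {x | ∀ q ∈ L, ‖x - p‖ ^ 2 - ω p ^ 2 ≤ ‖x - q‖ ^ 2 - ω q ^ 2}

theorem EuclideanGeometry.norm_sub_sq_eq_norm_sub_orthogonalProjection_sq_add
    {E : Type*} [NormedAddCommGroup E] [InnerProductSpace ℝ E] {s : AffineSubspace ℝ E}
    [Nonempty s] [s.direction.HasOrthogonalProjection] {x : E} (hx : x ∈ s) (q : E) :
    ‖x - q‖ ^ 2 =
      ‖x - orthogonalProjection s q‖ ^ 2 + ‖q - orthogonalProjection s q‖ ^ 2 := by
  simpa only [← dist_eq_norm, sq] using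
    dist_sq_eq_dist_orthogonalProjection_sq_add_dist_orthogonalProjection_sq q hx

open EuclideanGeometry

theorem restricted_voronoi_is_weighted_voronoi_in_flat_general
    (d : ℕ) (L : Finset (EuclideanSpace ℝ (Fin d))) (hL : L.Nonempty)
    (ω : EuclideanSpace ℝ (Fin d) → ℝ)
    (H : AffineSubspace ℝ (EuclideanSpace ℝ (Fin d))) [Nonempty H]
    (proj : EuclideanSpace ℝ (Fin d) → EuclideanSpace ℝ (Fin d))
    (hproj : ∀ q, proj q = (EuclideanGeometry.orthogonalProjection H q : EuclideanSpace ℝ (Fin d)))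
    (ξsq : EuclideanSpace ℝ (Fin d) → ℝ)
    (hξsq : ∀ q, ξsq q = ω q ^ 2 - ‖q - proj q‖ ^ 2 + (L.sup' hL fun x => ‖x - proj x‖ ^ 2))
    (p : EuclideanSpace ℝ (Fin d)) :
    vorCell L ω p ∩ (H : Set (EuclideanSpace ℝ (Fin d))) =
      {x | x ∈ H ∧ ∀ q ∈ L, ‖x - proj p‖ ^ 2 - ξsq p ≤ ‖x - proj q‖ ^ 2 - ξsq q} := by
  have power_le_iff : ∀ x ∈ H, ∀ q,
      ‖x - p‖ ^ 2 - ω p ^ 2 ≤ ‖x - q‖ ^ 2 - ω q ^ 2 ↔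
        ‖x - proj p‖ ^ 2 - ξsq p ≤ ‖x - proj q‖ ^ 2 - ξsq q := by
    intro x hx q
    rw [hξsq, hξsq, hproj, hproj, norm_sub_sq_eq_norm_sub_orthogonalProjection_sq_add hx p,
      norm_sub_sq_eq_norm_sub_orthogonalProjection_sq_add hx q]
    constructor <;> intro h <;> linarith
  ext x
  simp only [vorCell, Set.mem_inter_iff, SetLike.mem_coe]
  exact ⟨fun ⟨hv, hx⟩ => ⟨hx, fun q hq => (power_le_iff x hx q).1 (hv q hq)⟩,
    fun ⟨hx, hv⟩ => ⟨fun q hq => (power_le_iff x hx q).2 (hv q hq), hx⟩⟩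

/-- The restriction of a weighted Voronoi diagram to a `k`-flat `H` is the weighted Voronoi
diagram, inside `H`, of the projected points with the modified weights `ξ`. -/
theorem restricted_voronoi_is_weighted_voronoi_in_flat
    (d k : ℕ) (L : Finset (EuclideanSpace ℝ (Fin d))) (hL : L.Nonempty)
    (ω : EuclideanSpace ℝ (Fin d) → ℝ) (hω : ∀ q ∈ L, 0 ≤ ω q)
    (H : AffineSubspace ℝ (EuclideanSpace ℝ (Fin d))) [Nonempty H]
    (hdim : Module.finrank ℝ H.direction = k)
    (proj : EuclideanSpace ℝ (Fin d) → EuclideanSpace ℝ (Fin d))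
    (hproj : ∀ q, proj q = (EuclideanGeometry.orthogonalProjection H q : EuclideanSpace ℝ (Fin d)))
    (ξsq : EuclideanSpace ℝ (Fin d) → ℝ)
    (hξsq : ∀ q, ξsq q = ω q ^ 2 - ‖q - proj q‖ ^ 2 + (L.sup' hL fun x => ‖x - proj x‖ ^ 2))
    (p : EuclideanSpace ℝ (Fin d)) (hp : p ∈ L) :
    vorCell L ω p ∩ (H : Set (EuclideanSpace ℝ (Fin d))) =
      {x | x ∈ H ∧ ∀ q ∈ L, ‖x - proj p‖ ^ 2 - ξsq p ≤ ‖x - proj q‖ ^ 2 - ξsq q} :=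
  restricted_voronoi_is_weighted_voronoi_in_flat_general d L hL ω H proj hproj ξsq hξsq p
end
end

section
/- Let L be a finite set of points in ℝ^d, ω : L → [0,∞) a weight assignment, H ⊆ ℝ^d a k-dimensional affine subspace, and p ∈ L a point such that Vor_ω(p) ∩ H is nonempty and bounded. Then there exists a simplex σ ⊆ L containing p with cardinality at least k + 1 such that Vor_ω(σ) ∩ H ≠ ∅; that is, the maximal simplices incident to p in the restricted Delaunay complex Del_ω(L, H) = {σ ⊆ L : Vor_ω(σ) ∩ H ≠ ∅} have dimension at least k. -/
noncomputable section

/-- Weighted Voronoi face of a simplex `σ`. -/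
def vorFace {d : ℕ} (L : Finset (EuclideanSpace ℝ (Fin d))) (ω : EuclideanSpace ℝ (Fin d) → ℝ)
    (σ : Finset (EuclideanSpace ℝ (Fin d))) : Set (EuclideanSpace ℝ (Fin d)) :=
  ⋂ p ∈ σ, vorCell L ω p

/-!
`Vor_ω(p) ∩ H` is closed, hence compact, so by the Krein–Milman lemma it has an extreme point
`x`.
The sites at minimal power distance from `x` span a simplex `σ ∋ p` with `x ∈ Vor_ω(σ) ∩ H`.
If `σ` had at most `k` vertices, the at most `k - 1` normals `p - q` (`q ∈ σ`, `q ≠ p`) would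
leave a nonzero direction `v` of `H` orthogonal to all of them; the power distances to the sites
of `σ` then stay equal along `x ± t v`, and the other sites remain farther for small `t`, so
`x ± t v ∈ Vor_ω(p) ∩ H`, contradicting extremality.
-/

open Finset Filter Topology
open scoped RealInnerProductSpace

theorem exists_mem_ne_zero_forall_inner_eq_zero {E : Type*} [NormedAddCommGroup E]
    [InnerProductSpace ℝ E] (V : Submodule ℝ E) [FiniteDimensional ℝ V] (s : Finset E)
    (hs : s.card < Module.finrank ℝ V) : ∃ v ∈ V, v ≠ 0 ∧ ∀ u ∈ s, ⟪v, u⟫ = 0 := by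
  let f : V →ₗ[ℝ] (s → ℝ) :=
    LinearMap.pi fun u : s => (innerₛₗ ℝ (u : E)).comp V.subtype
  have hker : LinearMap.ker f ≠ ⊥ :=
    LinearMap.ker_ne_bot_of_finrank_lt (by simpa [Module.finrank_fintype_fun_eq_card] using hs)
  obtain ⟨v, hv, hv0⟩ := Submodule.exists_mem_ne_zero_of_ne_bot hker
  refine ⟨v, v.2, by simpa using hv0, fun u hu => ?_⟩
  rw [real_inner_comm]
  simpa [f] using congrFun (LinearMap.mem_ker.1 hv) ⟨u, hu⟩

section Voronoi

variable {d : ℕ} {L : Finset (EuclideanSpace ℝ (Fin d))} {ω : EuclideanSpace ℝ (Fin d) → ℝ}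
  {p q x v : EuclideanSpace ℝ (Fin d)}

def powerDist (ω : EuclideanSpace ℝ (Fin d) → ℝ) (x q : EuclideanSpace ℝ (Fin d)) : ℝ :=
  ‖x - q‖ ^ 2 - ω q ^ 2

theorem powerDist_sub_powerDist_add_smul (ω : EuclideanSpace ℝ (Fin d) → ℝ)
    (x v p q : EuclideanSpace ℝ (Fin d)) (t : ℝ) :
    powerDist ω (x + t • v) q - powerDist ω (x + t • v) p =
      powerDist ω x q - powerDist ω x p + 2 * t * ⟪v, p - q⟫ := by
  have hq : x + t • v - q = (x - q) + t • v := by abel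
  have hp : x + t • v - p = (x - p) + t • v := by abel
  simp only [powerDist, hq, hp, norm_add_sq_real, inner_smul_right, inner_sub_left,
    inner_sub_right]
  rw [real_inner_comm v p, real_inner_comm v q]
  ring

theorem mem_vorCell : x ∈ vorCell L ω p ↔ ∀ q ∈ L, powerDist ω x p ≤ powerDist ω x q :=
  Iff.rfl

theorem vorCell_eq_biInter (L : Finset (EuclideanSpace ℝ (Fin d)))
    (ω : EuclideanSpace ℝ (Fin d) → ℝ) (p : EuclideanSpace ℝ (Fin d)) :
    vorCell L ω p = ⋂ q ∈ L, {x | powerDist ω x p ≤ powerDist ω x q} := by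
  ext x
  simp [vorCell, powerDist]

theorem isClosed_vorCell : IsClosed (vorCell L ω p) := by
  rw [vorCell_eq_biInter]
  exact isClosed_biInter fun q _ => isClosed_le (by unfold powerDist; fun_prop)
    (by unfold powerDist; fun_prop)

open scoped Classical in
def nearestSites (L : Finset (EuclideanSpace ℝ (Fin d))) (ω : EuclideanSpace ℝ (Fin d) → ℝ)
    (x : EuclideanSpace ℝ (Fin d)) : Finset (EuclideanSpace ℝ (Fin d)) :=
  L.filter (x ∈ vorCell L ω ·)

theorem mem_nearestSites : q ∈ nearestSites L ω x ↔ q ∈ L ∧ x ∈ vorCell L ω q := by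
  classical
  simp [nearestSites]

theorem nearestSites_subset : nearestSites L ω x ⊆ L := fun _ hq => (mem_nearestSites.1 hq).1

theorem mem_vorFace_nearestSites : x ∈ vorFace L ω (nearestSites L ω x) :=
  Set.mem_iInter₂.2 fun _ hq => (mem_nearestSites.1 hq).2

theorem powerDist_eq_of_mem_nearestSites (hp : p ∈ L) (hx : x ∈ vorCell L ω p)
    (hq : q ∈ nearestSites L ω x) : powerDist ω x q = powerDist ω x p := by
  obtain ⟨hqL, hxq⟩ := mem_nearestSites.1 hq
  exact le_antisymm (hxq p hp) (hx q hqL)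

theorem powerDist_lt_of_not_mem_nearestSites (hx : x ∈ vorCell L ω p) (hq : q ∈ L)
    (hqx : q ∉ nearestSites L ω x) : powerDist ω x p < powerDist ω x q := by
  have hxq : x ∉ vorCell L ω q := fun h => hqx (mem_nearestSites.2 ⟨hq, h⟩)
  simp only [mem_vorCell, not_forall, not_le] at hxq
  obtain ⟨r, hr, hlt⟩ := hxq
  exact (hx r hr).trans_lt hlt

/-- The sites outside `nearestSites L ω x` are strictly farther from `x` than `p`, so they
stay farther for short times. -/
theorem eventually_add_smul_mem_vorCell (hp : p ∈ L) (hx : x ∈ vorCell L ω p)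
    (hv : ∀ q ∈ nearestSites L ω x, ⟪v, p - q⟫ = 0) :
    ∀ᶠ t in 𝓝 (0 : ℝ), x + t • v ∈ vorCell L ω p := by
  simp only [mem_vorCell, eventually_all_finset]
  intro q hqL
  simp_rw [← sub_nonneg (b := powerDist ω _ p), powerDist_sub_powerDist_add_smul]
  by_cases hq : q ∈ nearestSites L ω x
  · refine Eventually.of_forall fun t => ?_
    rw [powerDist_eq_of_mem_nearestSites hp hx hq, hv q hq]
    simp
  · have hlt := sub_pos.2 (powerDist_lt_of_not_mem_nearestSites hx hqL hq)
    refine (Tendsto.eventually_const_lt hlt ?_).mono fun t ht => ht.le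
    exact Continuous.tendsto' (by fun_prop) _ _ (by simp)

theorem finrank_direction_lt_card_nearestSites
    {H : AffineSubspace ℝ (EuclideanSpace ℝ (Fin d))} (hp : p ∈ L)
    (hx : x ∈ (vorCell L ω p ∩ (H : Set (EuclideanSpace ℝ (Fin d)))).extremePoints ℝ) :
    Module.finrank ℝ H.direction < (nearestSites L ω x).card := by
  obtain ⟨⟨hxp, hxH⟩, hext⟩ := mem_extremePoints_iff_left.1 hx
  have hpx : p ∈ nearestSites L ω x := mem_nearestSites.2 ⟨hp, hxp⟩
  by_contra! hcard
  have hnormals :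
      (((nearestSites L ω x).erase p).image (p - ·)).card < Module.finrank ℝ H.direction :=
    calc _ ≤ ((nearestSites L ω x).erase p).card := card_image_le
      _ < (nearestSites L ω x).card := card_erase_lt_of_mem hpx
      _ ≤ _ := hcard
  obtain ⟨v, hvH, hv0, hv⟩ := exists_mem_ne_zero_forall_inner_eq_zero H.direction _ hnormals
  have hvσ : ∀ q ∈ nearestSites L ω x, ⟪v, p - q⟫ = 0 := by
    intro q hq
    rcases eq_or_ne q p with rfl | hqp
    · simp
    · exact hv _ (mem_image_of_mem _ (mem_erase.2 ⟨hqp, hq⟩))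
  have hline (t : ℝ) : x + t • v ∈ H := by
    simpa [vadd_eq_add, add_comm] using
      AffineSubspace.vadd_mem_of_mem_direction (H.direction.smul_mem t hvH) hxH
  have hcell := eventually_add_smul_mem_vorCell hp hxp hvσ
  obtain ⟨t, ht, htp, htn⟩ :=
    (hcell.and ((continuous_neg.tendsto' (0 : ℝ) 0 neg_zero).eventually hcell)).exists_gt
  have hsub : x - t • v ∈ vorCell L ω p ∩ (H : Set (EuclideanSpace ℝ (Fin d))) := by
    rw [sub_eq_add_neg, ← neg_smul]
    exact ⟨htn, hline _⟩
  have hshift : x - t • v = x :=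
    hext _ hsub _ ⟨htp, hline t⟩ (mem_openSegment_sub_add x (t • v))
  exact smul_ne_zero ht.ne' hv0 (sub_eq_self.1 hshift)

end Voronoi

theorem maximal_simplex_dim_in_restricted_delaunay_general
    (d k : ℕ) (L : Finset (EuclideanSpace ℝ (Fin d)))
    (ω : EuclideanSpace ℝ (Fin d) → ℝ)
    (H : AffineSubspace ℝ (EuclideanSpace ℝ (Fin d)))
    (hdim : Module.finrank ℝ H.direction = k)
    (p : EuclideanSpace ℝ (Fin d)) (hp : p ∈ L)
    (hne : (vorCell L ω p ∩ (H : Set (EuclideanSpace ℝ (Fin d)))).Nonempty)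
    (hbdd : Bornology.IsBounded (vorCell L ω p ∩ (H : Set (EuclideanSpace ℝ (Fin d))))) :
    ∃ σ : Finset (EuclideanSpace ℝ (Fin d)), σ ⊆ L ∧ p ∈ σ ∧ k + 1 ≤ σ.card ∧
      (vorFace L ω σ ∩ (H : Set (EuclideanSpace ℝ (Fin d)))).Nonempty := by
  have hcompact : IsCompact (vorCell L ω p ∩ (H : Set (EuclideanSpace ℝ (Fin d)))) :=
    Metric.isCompact_of_isClosed_isBounded
      (isClosed_vorCell.inter H.closed_of_finiteDimensional) hbdd
  obtain ⟨x, hx⟩ := hcompact.extremePoints_nonempty hne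
  exact ⟨nearestSites L ω x, nearestSites_subset, mem_nearestSites.2 ⟨hp, hx.1.1⟩,
    hdim ▸ finrank_direction_lt_card_nearestSites hp hx, x, mem_vorFace_nearestSites, hx.1.2⟩

/-- If `Vor_ω(p) ∩ H` is nonempty and bounded for a `k`-flat `H`, then some simplex of the
restricted Delaunay complex `Del_ω(L, H)` incident to `p` has dimension at least `k`. -/
theorem maximal_simplex_dim_in_restricted_delaunay
    (d k : ℕ) (L : Finset (EuclideanSpace ℝ (Fin d)))
    (ω : EuclideanSpace ℝ (Fin d) → ℝ) (hω : ∀ q ∈ L, 0 ≤ ω q)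
    (H : AffineSubspace ℝ (EuclideanSpace ℝ (Fin d)))
    (hdim : Module.finrank ℝ H.direction = k)
    (p : EuclideanSpace ℝ (Fin d)) (hp : p ∈ L)
    (hne : (vorCell L ω p ∩ (H : Set (EuclideanSpace ℝ (Fin d)))).Nonempty)
    (hbdd : Bornology.IsBounded (vorCell L ω p ∩ (H : Set (EuclideanSpace ℝ (Fin d))))) :
    ∃ σ : Finset (EuclideanSpace ℝ (Fin d)), σ ⊆ L ∧ p ∈ σ ∧ k + 1 ≤ σ.card ∧
      (vorFace L ω σ ∩ (H : Set (EuclideanSpace ℝ (Fin d)))).Nonempty :=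
  maximal_simplex_dim_in_restricted_delaunay_general d k L ω H hdim p hp hne hbdd
end
end

section
/- Let L be a finite subset of ℝ^d, W ⊆ ℝ^d, and ω : L → [0,∞) a weight assignment. Suppose σ ⊆ L is a simplex such that every nonempty subset τ ⊆ σ has an ω-witness in W, i.e., there exists w ∈ W with ‖w − p‖² − ω(p)² ≤ ‖w − q‖² − ω(q)² for all p ∈ τ and all q ∈ L∖τ. Then the weighted Voronoi face Vor_ω(σ) is nonempty (so σ belongs to the weighted Delaunay complex Del_ω(L)); moreover, Vor_ω(σ) intersects the convex hull of the set of ω-witnesses of σ and of its subsimplices. -/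
/-!
The difference of two power distances is an affine function of `x` (the quadratic terms cancel),
so `Vor_ω(σ)` is cut out by finitely many affine inequalities `f_{pq}(x) ≤ 0`, `p ∈ σ`, `q ∈ L`.
If they had no common solution on the convex hull `K` of finitely many chosen witnesses,
separating the image of `K` from the nonpositive orthant would give weights `μ_{pq} ≥ 0` with
`∑ μ_{pq} f_{pq} > 0` on `K`. That sum equals `∑_r c_r d(·, r^ω)`, where `c_r` is the net outflow
of `μ` at `r`; thus `∑ c_r = 0` and `c_r ≤ 0` off `σ`. At a witness of `τ = {c > 0} ⊆ σ` every
point with `c_r > 0` is closer, in power distance, than every point with `c_r ≤ 0`, which makes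
the sum nonpositive: a contradiction.
-/

noncomputable section

/-- `w` is an `ω`-witness of the simplex `τ ⊆ L`. -/
def isWitness {d : ℕ} (L : Finset (EuclideanSpace ℝ (Fin d))) (ω : EuclideanSpace ℝ (Fin d) → ℝ)
    (w : EuclideanSpace ℝ (Fin d)) (τ : Finset (EuclideanSpace ℝ (Fin d))) : Prop :=
  ∀ p ∈ τ, ∀ q ∈ L, q ∉ τ → ‖w - p‖ ^ 2 - ω p ^ 2 ≤ ‖w - q‖ ^ 2 - ω q ^ 2

open Finset

section Alternative

variable {ι : Type*}

lemma LinearMap.apply_single_nonpos_of_forall_lt [DecidableEq ι] {g : (ι → ℝ) →ₗ[ℝ] ℝ} {v : ℝ}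
    (h : ∀ b ≤ 0, v < g b) (i : ι) : g (Pi.single i 1) ≤ 0 := by
  by_contra! hpos
  have hb : -((|v| + 1) / g (Pi.single i 1)) • Pi.single i (1 : ℝ) ≤ 0 := by
    refine smul_nonpos_of_nonpos_of_nonneg ?_ (Pi.single_nonneg.2 zero_le_one)
    exact neg_nonpos.2 (div_nonneg (by positivity) hpos.le)
  have := h _ hb
  rw [map_smul, smul_eq_mul, neg_mul, div_mul_cancel₀ _ hpos.ne'] at this
  linarith [neg_abs_le v]

lemma LinearMap.apply_eq_sum_mul_single [Fintype ι] [DecidableEq ι] (g : (ι → ℝ) →ₗ[ℝ] ℝ)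
    (x : ι → ℝ) : g x = ∑ i, x i * g (Pi.single i 1) := by
  conv_lhs => rw [pi_eq_sum_univ' x]
  simp [map_sum, map_smul]

variable {E : Type*} [AddCommGroup E] [Module ℝ E] [TopologicalSpace E]

theorem exists_mem_forall_nonpos_of_forall_exists_sum_nonpos {K : Set E} (hKc : Convex ℝ K)
    (hKk : IsCompact K) (s : Finset ι) (f : ι → E →ᴬ[ℝ] ℝ)
    (h : ∀ μ : ι → ℝ, 0 ≤ μ → ∃ x ∈ K, ∑ i ∈ s, μ i * f i x ≤ 0) :
    ∃ x ∈ K, ∀ i ∈ s, f i x ≤ 0 := by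
  classical
  by_contra hK
  let Φ : E →ᵃ[ℝ] (s → ℝ) := AffineMap.pi fun i => (f i : E →ᵃ[ℝ] ℝ)
  have hΦ : Continuous Φ := continuous_pi fun i => (f i).continuous
  have hdisj : Disjoint (Φ '' K) (Set.Iic 0) := by
    refine Set.disjoint_left.2 ?_
    rintro _ ⟨x, hx, rfl⟩ hle
    exact hK ⟨x, hx, fun i hi => hle ⟨i, hi⟩⟩
  obtain ⟨g, u, v, hgK, huv, hgI⟩ := geometric_hahn_banach_compact_closed
    (hKc.affine_image Φ) (hKk.image hΦ) (convex_Iic 0) isClosed_Iic hdisj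
  let μ : ι → ℝ := fun i => if hi : i ∈ s then -g (Pi.single ⟨i, hi⟩ 1) else 0
  have hμ : 0 ≤ μ := fun i => by
    by_cases hi : i ∈ s
    · simpa [μ, hi] using (g : (s → ℝ) →ₗ[ℝ] ℝ).apply_single_nonpos_of_forall_lt hgI ⟨i, hi⟩
    · simp [μ, hi]
  obtain ⟨x, hx, hsum⟩ := h μ hμ
  have hsum_eq : ∑ i ∈ s, μ i * f i x = -g (Φ x) := by
    have hg := (g : (s → ℝ) →ₗ[ℝ] ℝ).apply_eq_sum_mul_single (Φ x)
    rw [ContinuousLinearMap.coe_coe] at hg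
    rw [← Finset.sum_coe_sort, hg, ← sum_neg_distrib]
    refine Finset.sum_congr rfl fun i _ => ?_
    simp [μ, Φ, mul_comm]
  have hg0 : v < 0 := by simpa using hgI 0 Set.self_mem_Iic
  linarith [hgK _ ⟨x, hx, rfl⟩]

end Alternative

theorem Finset.sum_mul_nonpos_of_sum_eq_zero {α R : Type*} [CommRing R] [LinearOrder R]
    [IsStrictOrderedRing R] {s : Finset α} {c g : α → R} (t : R) (hc : ∑ r ∈ s, c r = 0)
    (hpos : ∀ r ∈ s, 0 < c r → g r ≤ t) (hnonpos : ∀ r ∈ s, c r ≤ 0 → t ≤ g r) :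
    ∑ r ∈ s, c r * g r ≤ 0 := by
  have hsplit : ∑ r ∈ s, c r * g r = ∑ r ∈ s, c r * (g r - t) + (∑ r ∈ s, c r) * t := by
    rw [sum_mul, ← sum_add_distrib]
    exact sum_congr rfl fun r _ => by ring
  rw [hsplit, hc, zero_mul, add_zero]
  refine sum_nonpos fun r hr => ?_
  rcases lt_or_ge 0 (c r) with hcr | hcr
  · exact mul_nonpos_of_nonneg_of_nonpos hcr.le (sub_nonpos.2 (hpos r hr hcr))
  · exact mul_nonpos_of_nonpos_of_nonneg hcr (sub_nonneg.2 (hnonpos r hr hcr))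

theorem Set.Finite.exists_finset_subset_forall_exists {ι α : Type*} {I : Set ι} (hI : I.Finite)
    {S : Set α} {P : ι → α → Prop} (h : ∀ i ∈ I, ∃ a ∈ S, P i a) :
    ∃ T : Finset α, ↑T ⊆ S ∧ ∀ i ∈ I, ∃ a ∈ T, P i a := by
  choose f hfS hfP using h
  refine ⟨(hI.dependent_image f).toFinset, fun a ha => ?_, fun i hi => ⟨f i hi, ?_, hfP i hi⟩⟩
  · obtain ⟨i, hi, rfl⟩ := (hI.dependent_image f).mem_toFinset.1 ha
    exact hfS i hi
  · exact (hI.dependent_image f).mem_toFinset.2 ⟨i, hi, rfl⟩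

section PowerDistance

variable {F : Type*} [NormedAddCommGroup F] [InnerProductSpace ℝ F]

def powerDiff (ω : F → ℝ) (p q : F) : F →ᴬ[ℝ] ℝ :=
  (2 • innerSL ℝ (q - p)).toContinuousAffineMap +
    ContinuousAffineMap.const ℝ F (‖p‖ ^ 2 - ω p ^ 2 - (‖q‖ ^ 2 - ω q ^ 2))

theorem powerDiff_apply (ω : F → ℝ) (p q x : F) :
    powerDiff ω p q x = (‖x - p‖ ^ 2 - ω p ^ 2) - (‖x - q‖ ^ 2 - ω q ^ 2) := by
  simp only [powerDiff, map_sub, ContinuousAffineMap.coe_add,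
    ContinuousLinearMap.coe_toContinuousAffineMap, FunLike.coe_smul, FunLike.coe_sub,
    coe_innerSL_apply, nsmul_eq_mul, Nat.cast_ofNat, ContinuousAffineMap.coe_const, Pi.add_apply,
    Pi.mul_apply, Pi.ofNat_apply, Pi.sub_apply, real_inner_comm x, Function.const_apply,
    norm_sub_sq_real]
  ring

end PowerDistance

section NetOutflow

variable {α : Type*} [DecidableEq α]

def netOutflow (σ L : Finset α) (μ : α × α → ℝ) (r : α) : ℝ :=
  (if r ∈ σ then ∑ q ∈ L, μ (r, q) else 0) - ∑ p ∈ σ, μ (p, r)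

variable {σ L : Finset α} {μ : α × α → ℝ}

theorem sum_mul_sub_eq_sum_netOutflow_mul (hσL : σ ⊆ L) (μ : α × α → ℝ) (g : α → ℝ) :
    ∑ i ∈ σ ×ˢ L, μ i * (g i.1 - g i.2) = ∑ r ∈ L, netOutflow σ L μ r * g r := by
  simp only [netOutflow, sub_mul, sum_sub_distrib, ite_mul, zero_mul, sum_ite_mem,
    inter_eq_right.2 hσL, mul_sub, sum_product, sum_mul]
  rw [sum_comm (s := L)]

theorem sum_netOutflow (hσL : σ ⊆ L) (μ : α × α → ℝ) : ∑ r ∈ L, netOutflow σ L μ r = 0 := by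
  simpa using (sum_mul_sub_eq_sum_netOutflow_mul hσL μ fun _ => 1).symm

theorem netOutflow_nonpos_of_notMem (hμ : 0 ≤ μ) {r : α} (hr : r ∉ σ) :
    netOutflow σ L μ r ≤ 0 := by
  simpa [netOutflow, hr] using sum_nonneg fun p _ => hμ (p, r)

end NetOutflow

theorem exists_mem_sum_mul_powerDiff_nonpos {d : ℕ} {L σ : Finset (EuclideanSpace ℝ (Fin d))}
    {ω : EuclideanSpace ℝ (Fin d) → ℝ} {T : Set (EuclideanSpace ℝ (Fin d))} (hσL : σ ⊆ L)
    (hσne : σ.Nonempty) (hT : ∀ τ ⊆ σ, τ.Nonempty → ∃ w ∈ T, isWitness L ω w τ)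
    {μ : EuclideanSpace ℝ (Fin d) × EuclideanSpace ℝ (Fin d) → ℝ} (hμ : 0 ≤ μ) :
    ∃ w ∈ T, ∑ i ∈ σ ×ˢ L, μ i * powerDiff ω i.1 i.2 w ≤ 0 := by
  classical
  set c := netOutflow σ L μ
  suffices ∃ w ∈ T, ∑ r ∈ L, c r * (‖w - r‖ ^ 2 - ω r ^ 2) ≤ 0 by
    obtain ⟨w, hw, hsum⟩ := this
    refine ⟨w, hw, le_of_eq_of_le ?_ hsum⟩
    simp only [powerDiff_apply]
    exact sum_mul_sub_eq_sum_netOutflow_mul hσL μ fun r => ‖w - r‖ ^ 2 - ω r ^ 2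
  by_cases hc : ∀ r ∈ L, c r ≤ 0
  · have hc0 := (sum_eq_zero_iff_of_nonpos hc).1 (sum_netOutflow hσL μ)
    obtain ⟨w, hw, -⟩ := hT σ subset_rfl hσne
    exact ⟨w, hw, (sum_eq_zero fun r hr => by rw [hc0 r hr, zero_mul]).le⟩
  push Not at hc
  set τ := L.filter (0 < c ·)
  have hτσ : τ ⊆ σ := fun r hr => by
    by_contra hrσ
    exact (netOutflow_nonpos_of_notMem hμ hrσ).not_gt (mem_filter.1 hr).2
  have hτ : τ.Nonempty := let ⟨r, hr, hcr⟩ := hc; ⟨r, mem_filter.2 ⟨hr, hcr⟩⟩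
  obtain ⟨w, hw, hwit⟩ := hT τ hτσ hτ
  let g r := ‖w - r‖ ^ 2 - ω r ^ 2
  refine ⟨w, hw, sum_mul_nonpos_of_sum_eq_zero (τ.sup' hτ g) (sum_netOutflow hσL μ)
    (fun r hr hcr => le_sup' g (mem_filter.2 ⟨hr, hcr⟩)) fun q hq hcq => ?_⟩
  exact sup'_le _ _ fun p hp => hwit p hp q hq fun hqτ => (mem_filter.1 hqτ).2.not_ge hcq

theorem witness_implies_delaunay_general
    (d : ℕ) (L : Finset (EuclideanSpace ℝ (Fin d))) (W : Set (EuclideanSpace ℝ (Fin d)))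
    (ω : EuclideanSpace ℝ (Fin d) → ℝ)
    (σ : Finset (EuclideanSpace ℝ (Fin d))) (hσL : σ ⊆ L) (hσne : σ.Nonempty)
    (hwit : ∀ τ : Finset (EuclideanSpace ℝ (Fin d)), τ ⊆ σ → τ.Nonempty →
      ∃ w ∈ W, isWitness L ω w τ) :
    (vorFace L ω σ).Nonempty ∧
    (vorFace L ω σ ∩ convexHull ℝ
      {w | w ∈ W ∧ ∃ τ : Finset (EuclideanSpace ℝ (Fin d)), τ ⊆ σ ∧ τ.Nonempty ∧
        isWitness L ω w τ}).Nonempty := by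
  have hfaces : {τ | τ ⊆ σ ∧ τ.Nonempty}.Finite :=
    σ.powerset.finite_toSet.subset fun τ hτ => mem_coe.2 (mem_powerset.2 hτ.1)
  obtain ⟨T, hTW, hT⟩ := hfaces.exists_finset_subset_forall_exists
    (S := {w | w ∈ W ∧ ∃ τ, τ ⊆ σ ∧ τ.Nonempty ∧ isWitness L ω w τ})
    (P := fun τ w => isWitness L ω w τ)
    fun τ ⟨hτσ, hτ⟩ => let ⟨w, hw, hwτ⟩ := hwit τ hτσ hτ; ⟨w, ⟨hw, τ, hτσ, hτ, hwτ⟩, hwτ⟩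
  obtain ⟨x, hxT, hx⟩ := exists_mem_forall_nonpos_of_forall_exists_sum_nonpos
    (convex_convexHull ℝ (T : Set _)) (T.finite_toSet.isCompact_convexHull (𝕜 := ℝ)) (σ ×ˢ L)
    (fun i => powerDiff ω i.1 i.2) fun μ hμ =>
      let ⟨w, hw, hsum⟩ := exists_mem_sum_mul_powerDiff_nonpos hσL hσne
        (fun τ hτσ hτ => hT τ ⟨hτσ, hτ⟩) hμ
      ⟨w, subset_convexHull ℝ _ hw, hsum⟩
  have hxσ : x ∈ vorFace L ω σ := by
    simp only [vorFace, vorCell, Set.mem_iInter]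
    intro p hp q hq
    simpa [powerDiff_apply] using hx (p, q) (mem_product.2 ⟨hp, hq⟩)
  exact ⟨⟨x, hxσ⟩, x, hxσ, convexHull_mono hTW hxT⟩

/-- de Silva's theorem (weighted version): if every face of `σ` has an `ω`-witness in `W`,
then `σ` is a weighted Delaunay simplex; moreover `Vor_ω(σ)` meets the convex hull of the
`ω`-witnesses of `σ` and of its subsimplices. -/
theorem witness_implies_delaunay
    (d : ℕ) (L : Finset (EuclideanSpace ℝ (Fin d))) (W : Set (EuclideanSpace ℝ (Fin d)))
    (ω : EuclideanSpace ℝ (Fin d) → ℝ) (hω : ∀ q ∈ L, 0 ≤ ω q)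
    (σ : Finset (EuclideanSpace ℝ (Fin d))) (hσL : σ ⊆ L) (hσne : σ.Nonempty)
    (hwit : ∀ τ : Finset (EuclideanSpace ℝ (Fin d)), τ ⊆ σ → τ.Nonempty →
      ∃ w ∈ W, isWitness L ω w τ) :
    (vorFace L ω σ).Nonempty ∧
    (vorFace L ω σ ∩ convexHull ℝ
      {w | w ∈ W ∧ ∃ τ : Finset (EuclideanSpace ℝ (Fin d)), τ ⊆ σ ∧ τ.Nonempty ∧
        isWitness L ω w τ}).Nonempty :=
  witness_implies_delaunay_general d L W ω σ hσL hσne hwit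
end
end
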